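/- Collapse of exact maximizers to ordinary Kelly: Fix α ∈ (0,1). For each n ≥ 1 let W_n ∈ W̄ be any point attaining sup_{W ∈ W̄} Q_{n,α}(W), i.e. Q_{n,α}(W_n) = sup_{W ∈ W̄} Q_{n,α}(W). Then W_n → W^K as n → ∞, where W^K_i = p_i/q_i. -/

import Mathlib

open Finset Filter Topology
open scoped Classical

noncomputable section

/-- The closed Arrow–Debreu wealth simplex `{W ∈ [0,∞)^m : Σ q_i W_i = 1}`. -/
def closedSimplex {m : ℕ} (q : Fin m → ℝ) : Set (Fin m → ℝ) :=
  {W | (∀ i, 0 ≤ W i) ∧ ∑ i, q i * W i = 1}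

/-- The open Arrow–Debreu wealth simplex `{W ∈ (0,∞)^m : Σ q_i W_i = 1}`. -/
def openSimplex {m : ℕ} (q : Fin m → ℝ) : Set (Fin m → ℝ) :=
  {W | (∀ i, 0 < W i) ∧ ∑ i, q i * W i = 1}

/-- The finite set `C_n` of count vectors `k : Fin m → ℕ` with `Σ k_i = n`. -/
def countFinset (m n : ℕ) : Finset (Fin m → ℕ) :=
  (Fintype.piFinset fun _ : Fin m => Finset.range (n + 1)).filter fun k => ∑ i, k i = n

/-- The monomial `W^k := Π_i W_i^{k_i}` (with the convention `0^0 = 1`). -/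
def mono {m : ℕ} (W : Fin m → ℝ) (k : Fin m → ℕ) : ℝ := ∏ i, W i ^ k i

/-- The multinomial probability `π_k = (n!/(k_1!⋯k_m!))·Π p_i^{k_i}`. -/
def countProb {m : ℕ} (p : Fin m → ℝ) (k : Fin m → ℕ) : ℝ :=
  (Nat.multinomial Finset.univ k : ℝ) * ∏ i, p i ^ k i

/-- The upper α-quantile of terminal wealth
`Q_{n,α}(W) := sup{t ∈ [0,∞) : Σ_{k ∈ C_n : W^k ≥ t} π_k ≥ α}`. -/
def upperQuantile {m : ℕ} (p : Fin m → ℝ) (n : ℕ) (α : ℝ) (W : Fin m → ℝ) : ℝ :=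
  sSup {t : ℝ | 0 ≤ t ∧
    α ≤ ∑ k ∈ countFinset m n, if t ≤ mono W k then countProb p k else 0}

/-- The union of the count hyperplanes `H_{k,ℓ}`. -/
def hyperUnion (m n : ℕ) : Set (Fin m → ℝ) :=
  {u | ∃ k ∈ countFinset m n, ∃ l ∈ countFinset m n,
    k ≠ l ∧ ∑ i, ((k i : ℝ) - (l i : ℝ)) * u i = 0}

/-- A chamber is a connected component of the complement of the count arrangement. -/
def IsChamber (m n : ℕ) (Γ : Set (Fin m → ℝ)) : Prop :=
  ∃ u ∈ (hyperUnion m n)ᶜ, Γ = connectedComponentIn (hyperUnion m n)ᶜ u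

/-- `F_Γ := {W ∈ W⁺⁺ : log W ∈ Γ}`. -/
def chamberFace {m : ℕ} (q : Fin m → ℝ) (Γ : Set (Fin m → ℝ)) : Set (Fin m → ℝ) :=
  {W | W ∈ openSimplex q ∧ (fun i => Real.log (W i)) ∈ Γ}

/-- `k` is the quantile count vector `k_{α,Γ}` of the chamber `Γ`: the tail mass at `W^k`
is at least `α`, while the strict tail mass is below `α`, for every `W ∈ F_Γ`. -/
def IsQuantileVec {m : ℕ} (p q : Fin m → ℝ) (n : ℕ) (α : ℝ) (Γ : Set (Fin m → ℝ))
    (k : Fin m → ℕ) : Prop :=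
  k ∈ countFinset m n ∧
  ∀ W ∈ chamberFace q Γ,
    α ≤ (∑ l ∈ countFinset m n, if mono W k ≤ mono W l then countProb p l else 0) ∧
    (∑ l ∈ countFinset m n, if mono W k < mono W l then countProb p l else 0) < α

/-!
Markov's inequality for `(W^k)^s` gives `α · Q_{n,α}(W)^s ≤ (Σ p_i W_i^s)^n` for every `s > 0`,
while a Chernoff bound on the lower tail gives `Q_{n,α}(W^K) ≥ exp(n r)` eventually, for every
`r < Λ := Σ p_i log(p_i/q_i)`. If `W ≠ W^K` lies in the simplex, then either `W` has a zero
coordinate, so that `Σ_{W_i > 0} p_i < 1`, or the strict Gibbs inequality `Σ p_i log W_i < Λ`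
holds; comparing values, resp. derivatives, at `s = 0` gives `Σ p_i W_i^s < exp(s Λ)` for small
`s > 0`. Near such a `W` the quantile therefore grows at an exponential rate strictly below `Λ`,
so `W` is not a cluster point of the maximizers, which live in the compact simplex.
-/

lemma countFinset_eq_piAntidiag (m n : ℕ) : countFinset m n = piAntidiag univ n := by
  ext k
  simp only [countFinset, mem_filter, Fintype.mem_piFinset, mem_range, Nat.lt_succ_iff,
    mem_piAntidiag, mem_univ, implies_true, and_true, and_iff_right_iff_imp]
  rintro rfl i
  exact single_le_sum (fun j _ => Nat.zero_le _) (mem_univ i)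

section Multinomial

variable {m : ℕ}

lemma sum_countProb_mul_mono (n : ℕ) (p y : Fin m → ℝ) :
    ∑ k ∈ countFinset m n, countProb p k * mono y k = (∑ i, p i * y i) ^ n := by
  rw [sum_pow_eq_sum_piAntidiag, ← countFinset_eq_piAntidiag]
  refine sum_congr rfl fun k _ => ?_
  simp only [countProb, mono, mul_pow, prod_mul_distrib]
  ring

lemma sum_countProb {p : Fin m → ℝ} (hpsum : ∑ i, p i = 1) (n : ℕ) :
    ∑ k ∈ countFinset m n, countProb p k = 1 := by
  simpa [mono, hpsum] using sum_countProb_mul_mono n p 1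

lemma countProb_nonneg {p : Fin m → ℝ} (hp : ∀ i, 0 ≤ p i) (k : Fin m → ℕ) :
    0 ≤ countProb p k :=
  mul_nonneg (Nat.cast_nonneg _) (prod_nonneg fun i _ => pow_nonneg (hp i) _)

lemma mono_nonneg {W : Fin m → ℝ} (hW : ∀ i, 0 ≤ W i) (k : Fin m → ℕ) : 0 ≤ mono W k :=
  prod_nonneg fun i _ => pow_nonneg (hW i) _

lemma mono_pos {W : Fin m → ℝ} (hW : ∀ i, 0 < W i) (k : Fin m → ℕ) : 0 < mono W k :=
  prod_pos fun i _ => pow_pos (hW i) _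

lemma mono_rpow {W : Fin m → ℝ} (hW : ∀ i, 0 ≤ W i) (s : ℝ) (k : Fin m → ℕ) :
    mono W k ^ s = mono (fun i => W i ^ s) k := by
  rw [mono, ← Real.finsetProd_rpow _ _ fun i _ => pow_nonneg (hW i) _]
  refine prod_congr rfl fun i _ => ?_
  rw [← Real.rpow_natCast, ← Real.rpow_mul (hW i), mul_comm, Real.rpow_mul (hW i),
    Real.rpow_natCast]

lemma mono_inv (W : Fin m → ℝ) (k : Fin m → ℕ) :
    (mono W k)⁻¹ = mono (fun i => (W i)⁻¹) k := by
  simp only [mono, ← prod_inv_distrib, inv_pow]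

end Multinomial

section Quantile

variable {m n : ℕ} {p W : Fin m → ℝ} {α : ℝ}

def quantileSet (p : Fin m → ℝ) (n : ℕ) (α : ℝ) (W : Fin m → ℝ) : Set ℝ :=
  {t | 0 ≤ t ∧ α ≤ ∑ k ∈ countFinset m n, if t ≤ mono W k then countProb p k else 0}

lemma upperQuantile_eq_sSup : upperQuantile p n α W = sSup (quantileSet p n α W) := rfl

lemma mul_rpow_le_of_mem_quantileSet (hp : ∀ i, 0 ≤ p i) (hW : ∀ i, 0 ≤ W i) {s t : ℝ}
    (hs : 0 ≤ s) (ht : t ∈ quantileSet p n α W) :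
    α * t ^ s ≤ (∑ i, p i * W i ^ s) ^ n := by
  calc α * t ^ s
      ≤ (∑ k ∈ countFinset m n, if t ≤ mono W k then countProb p k else 0) * t ^ s :=
        mul_le_mul_of_nonneg_right ht.2 (Real.rpow_nonneg ht.1 s)
    _ = ∑ k ∈ countFinset m n, (if t ≤ mono W k then countProb p k else 0) * t ^ s :=
        sum_mul ..
    _ ≤ ∑ k ∈ countFinset m n, countProb p k * mono W k ^ s := by
        refine sum_le_sum fun k _ => ?_
        split_ifs with h
        · exact mul_le_mul_of_nonneg_left (Real.rpow_le_rpow ht.1 h hs) (countProb_nonneg hp k)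
        · rw [zero_mul]
          exact mul_nonneg (countProb_nonneg hp k) (Real.rpow_nonneg (mono_nonneg hW k) s)
    _ = (∑ i, p i * W i ^ s) ^ n := by
        simp_rw [mono_rpow hW s]
        exact sum_countProb_mul_mono n p _

lemma bddAbove_quantileSet (hp : ∀ i, 0 ≤ p i) (hα : 0 < α) (hW : ∀ i, 0 ≤ W i) :
    BddAbove (quantileSet p n α W) := by
  refine ⟨(∑ i, p i * W i) ^ n / α, fun t ht => ?_⟩
  rw [le_div_iff₀ hα, mul_comm]
  simpa using mul_rpow_le_of_mem_quantileSet hp hW zero_le_one ht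

lemma upperQuantile_rpow_le (hp : ∀ i, 0 ≤ p i) (hα : 0 < α) (hW : ∀ i, 0 ≤ W i) {s : ℝ}
    (hs : 0 < s) : upperQuantile p n α W ^ s ≤ (∑ i, p i * W i ^ s) ^ n / α := by
  rw [upperQuantile_eq_sSup]
  have hB : 0 ≤ (∑ i, p i * W i ^ s) ^ n / α :=
    div_nonneg (pow_nonneg (sum_nonneg fun i _ =>
      mul_nonneg (hp i) (Real.rpow_nonneg (hW i) s)) n) hα.le
  have hQ : 0 ≤ sSup (quantileSet p n α W) := Real.sSup_nonneg fun t ht => ht.1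
  refine (Real.le_rpow_inv_iff_of_pos hQ hB hs).1 (Real.sSup_le (fun t ht => ?_) (by positivity))
  refine (Real.le_rpow_inv_iff_of_pos ht.1 hB hs).2 ?_
  rw [le_div_iff₀ hα, mul_comm]
  exact mul_rpow_le_of_mem_quantileSet hp hW hs.le ht

lemma sum_countProb_mono_lt_le (hp : ∀ i, 0 ≤ p i) (hW : ∀ i, 0 < W i) {s t : ℝ} (hs : 0 ≤ s)
    (ht : 0 ≤ t) :
    ∑ k ∈ countFinset m n, (if mono W k < t then countProb p k else 0)
      ≤ t ^ s * (∑ i, p i * (W i)⁻¹ ^ s) ^ n := by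
  have hWinv : ∀ i, 0 ≤ (W i)⁻¹ := fun i => (inv_pos.2 (hW i)).le
  calc ∑ k ∈ countFinset m n, (if mono W k < t then countProb p k else 0)
      ≤ ∑ k ∈ countFinset m n, countProb p k * (t * (mono W k)⁻¹) ^ s := by
        refine sum_le_sum fun k _ => ?_
        have hmono := mono_pos hW k
        split_ifs with h
        · refine le_mul_of_one_le_right (countProb_nonneg hp k) (Real.one_le_rpow ?_ hs)
          rw [← div_eq_mul_inv, one_le_div hmono]
          exact h.le
        · exact mul_nonneg (countProb_nonneg hp k)
            (Real.rpow_nonneg (mul_nonneg ht (inv_pos.2 hmono).le) s)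
    _ = t ^ s * ∑ k ∈ countFinset m n, countProb p k * mono (fun i => (W i)⁻¹ ^ s) k := by
        rw [mul_sum]
        refine sum_congr rfl fun k _ => ?_
        rw [mono_inv, Real.mul_rpow ht (mono_nonneg hWinv k), mono_rpow hWinv]
        ring
    _ = t ^ s * (∑ i, p i * (W i)⁻¹ ^ s) ^ n := by rw [sum_countProb_mul_mono]

lemma eventually_upperQuantile_rpow_le (hp : ∀ i, 0 ≤ p i) (hα : 0 < α) {s c : ℝ} (hs : 0 < s)
    (hlt : ∑ i, p i * W i ^ s < c) :
    ∀ᶠ V in 𝓝 W, ∀ n : ℕ, (∀ i, 0 ≤ V i) → upperQuantile p n α V ^ s ≤ c ^ n / α := by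
  have hcont : Continuous fun V : Fin m → ℝ => ∑ i, p i * V i ^ s := by
    fun_prop (disch := exact hs.le)
  filter_upwards [(hcont.tendsto W).eventually_lt_const hlt] with V hV n hV0
  refine (upperQuantile_rpow_le hp hα hV0 hs).trans ?_
  gcongr
  exact sum_nonneg fun i _ => mul_nonneg (hp i) (Real.rpow_nonneg (hV0 i) s)

end Quantile

section Simplex

variable {m : ℕ} {q W : Fin m → ℝ}

lemma le_inv_of_mem_closedSimplex (hq : ∀ i, 0 < q i) (hW : W ∈ closedSimplex q) (i : Fin m) :
    W i ≤ (q i)⁻¹ := by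
  rw [inv_eq_one_div, le_div_iff₀ (hq i), mul_comm, ← hW.2]
  exact single_le_sum (f := fun j => q j * W j)
    (fun j _ => mul_nonneg (hq j).le (hW.1 j)) (mem_univ i)

lemma isCompact_closedSimplex (hq : ∀ i, 0 < q i) : IsCompact (closedSimplex q) := by
  have hclosed : IsClosed (closedSimplex q) := by
    simp only [closedSimplex, Set.ofPred_and, Set.ofPred_forall]
    exact (isClosed_iInter fun i => isClosed_le continuous_const (continuous_apply i)).inter
      (isClosed_eq (by fun_prop) continuous_const)
  refine (isCompact_univ_pi fun i => isCompact_Icc).of_isClosed_subset hclosed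
    fun W hW i _ => ⟨hW.1 i, le_inv_of_mem_closedSimplex hq hW i⟩

lemma kelly_mem_closedSimplex {p : Fin m → ℝ} (hp : ∀ i, 0 < p i) (hpsum : ∑ i, p i = 1)
    (hq : ∀ i, 0 < q i) : (fun i => p i / q i) ∈ closedSimplex q :=
  ⟨fun i => (div_pos (hp i) (hq i)).le, by
    simp_rw [mul_div_cancel₀ _ (hq _).ne', hpsum]⟩

lemma upperQuantile_le_of_mem_closedSimplex {n : ℕ} {p : Fin m → ℝ} {α : ℝ}
    (hp : ∀ i, 0 ≤ p i) (hq : ∀ i, 0 < q i) (hα : 0 < α) (hW : W ∈ closedSimplex q) :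
    upperQuantile p n α W ≤ (∑ i, p i / q i) ^ n / α := by
  have h := upperQuantile_rpow_le (n := n) hp hα hW.1 one_pos
  simp only [Real.rpow_one] at h
  refine h.trans ?_
  gcongr with i
  · exact sum_nonneg fun i _ => mul_nonneg (hp i) (hW.1 i)
  · rw [div_eq_mul_inv]
    exact mul_le_mul_of_nonneg_left (le_inv_of_mem_closedSimplex hq hW i) (hp i)

end Simplex

lemma eventually_nhdsGT_neg_of_hasDerivAt {h : ℝ → ℝ} {h' : ℝ} (hd : HasDerivAt h h' 0)
    (h0 : h 0 ≤ 0) (hneg : h 0 < 0 ∨ h' < 0) : ∀ᶠ s in 𝓝[>] 0, h s < 0 := by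
  rcases hneg with hneg | hneg
  · exact nhdsWithin_le_nhds (hd.continuousAt.eventually_lt continuousAt_const hneg)
  · filter_upwards [hd.tendsto_slope_zero_right.eventually_lt_const hneg, self_mem_nhdsWithin]
      with s hslope hs
    rw [zero_add, smul_eq_mul] at hslope
    linarith [neg_of_mul_neg_right hslope (inv_nonneg.2 (le_of_lt hs))]

lemma eventually_sum_rpow_lt_exp {ι : Type*} {S : Finset ι} {p a : ι → ℝ}
    (ha : ∀ i ∈ S, 0 < a i) {c : ℝ} (hp1 : ∑ i ∈ S, p i ≤ 1)
    (h : ∑ i ∈ S, p i < 1 ∨ ∑ i ∈ S, p i * Real.log (a i) < c) :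
    ∀ᶠ s in 𝓝[>] 0, ∑ i ∈ S, p i * a i ^ s < Real.exp (s * c) := by
  have hd : HasDerivAt (fun s => ∑ i ∈ S, p i * a i ^ s - Real.exp (s * c))
      (∑ i ∈ S, p i * Real.log (a i) - c) 0 := by
    have hsum := HasDerivAt.fun_sum fun i hi =>
      ((Real.hasStrictDerivAt_const_rpow (ha i hi) 0).hasDerivAt.const_mul (p i))
    have hexp := ((hasDerivAt_id (0 : ℝ)).mul_const c).exp
    simpa using hsum.fun_sub hexp
  filter_upwards [eventually_nhdsGT_neg_of_hasDerivAt hd (by simpa using hp1)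
    (by simpa using h)] with s hs
  linarith

section Kelly

variable {m : ℕ} {p q W : Fin m → ℝ}

lemma sum_mul_log_lt_of_ne_kelly (hp : ∀ i, 0 < p i) (hpsum : ∑ i, p i = 1)
    (hq : ∀ i, 0 < q i) (hW : ∀ i, 0 < W i) (hWq : ∑ i, q i * W i = 1)
    (hne : W ≠ fun i => p i / q i) :
    ∑ i, p i * Real.log (W i) < ∑ i, p i * Real.log (p i / q i) := by
  obtain ⟨j, hj⟩ := Function.ne_iff.mp hne
  have hK : ∀ i, 0 < p i / q i := fun i => div_pos (hp i) (hq i)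
  have hratio : ∀ i, p i * (W i / (p i / q i) - 1) = q i * W i - p i := fun i => by
    field_simp [(hp i).ne', (hq i).ne']
  have hlt : ∑ i, p i * Real.log (W i / (p i / q i)) < ∑ i, (q i * W i - p i) := by
    simp_rw [← hratio]
    refine sum_lt_sum (fun i _ => ?_) ⟨j, mem_univ j, ?_⟩
    · exact mul_le_mul_of_nonneg_left
        (Real.log_le_sub_one_of_pos (div_pos (hW i) (hK i))) (hp i).le
    · refine mul_lt_mul_of_pos_left (Real.log_lt_sub_one_of_pos (div_pos (hW j) (hK j)) ?_) (hp j)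
      rwa [Ne, div_eq_one_iff_eq (hK j).ne']
  simp_rw [Real.log_div (hW _).ne' (hK _).ne', mul_sub, sum_sub_distrib, hWq, hpsum,
    sub_self, sub_neg] at hlt
  exact hlt

lemma exists_sum_rpow_lt_exp_kelly (hp : ∀ i, 0 < p i) (hpsum : ∑ i, p i = 1)
    (hq : ∀ i, 0 < q i) (hW : W ∈ closedSimplex q) (hne : W ≠ fun i => p i / q i) :
    ∃ s > 0, ∑ i, p i * W i ^ s < Real.exp (s * ∑ i, p i * Real.log (p i / q i)) := by
  set S := univ.filter fun i => 0 < W i with hS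
  have hsupp : ∀ s : ℝ, s ≠ 0 → ∑ i ∈ S, p i * W i ^ s = ∑ i, p i * W i ^ s := fun s hs =>
    sum_filter_of_ne fun i _ hi => (hW.1 i).lt_of_ne' fun h0 => hi (by simp [h0, hs])
  have hS1 : ∑ i ∈ S, p i ≤ 1 :=
    hpsum ▸ sum_le_sum_of_subset_of_nonneg (filter_subset _ _) fun i _ _ => (hp i).le
  have hcase : ∑ i ∈ S, p i < 1 ∨ ∑ i ∈ S, p i * Real.log (W i)
      < ∑ i, p i * Real.log (p i / q i) := by
    by_cases hpos : ∀ i, 0 < W i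
    · right
      rw [hS, filter_true_of_mem fun i _ => hpos i]
      exact sum_mul_log_lt_of_ne_kelly hp hpsum hq hpos hW.2 hne
    · left
      obtain ⟨j, hj⟩ := not_forall.1 hpos
      exact hpsum ▸ sum_lt_sum_of_subset (filter_subset _ _) (mem_univ j)
        (by simpa [S] using hj) (hp j) fun i _ _ => (hp i).le
  obtain ⟨s, hlt, hs⟩ := ((eventually_sum_rpow_lt_exp (fun i hi => (mem_filter.1 hi).2) hS1
    hcase).and self_mem_nhdsWithin).exists
  exact ⟨s, hs, hsupp s (ne_of_gt hs) ▸ hlt⟩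

end Kelly

lemma eventually_exp_le_upperQuantile {m : ℕ} {p K : Fin m → ℝ} {α r : ℝ}
    (hp : ∀ i, 0 ≤ p i) (hpsum : ∑ i, p i = 1) (hK : ∀ i, 0 < K i) (hα : 0 < α) (hα1 : α < 1)
    (hr : r < ∑ i, p i * Real.log (K i)) :
    ∀ᶠ n : ℕ in atTop, Real.exp (n * r) ≤ upperQuantile p n α K := by
  have hlog : ∑ i, p i * Real.log (K i)⁻¹ < -r := by
    simp only [Real.log_inv, mul_neg, sum_neg_distrib, neg_lt_neg_iff, hr]
  obtain ⟨s, hlt, hs⟩ := ((eventually_sum_rpow_lt_exp (S := univ)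
    (fun i _ => inv_pos.2 (hK i)) hpsum.le (Or.inr hlog)).and self_mem_nhdsWithin).exists
  set ρ := Real.exp (s * r) * ∑ i, p i * (K i)⁻¹ ^ s
  have hρ0 : 0 ≤ ρ := mul_nonneg (Real.exp_pos _).le
    (sum_nonneg fun i _ => mul_nonneg (hp i) (Real.rpow_nonneg (inv_pos.2 (hK i)).le s))
  have hρ1 : ρ < 1 := by
    calc ρ < Real.exp (s * r) * Real.exp (s * -r) :=
          mul_lt_mul_of_pos_left hlt (Real.exp_pos _)
      _ = 1 := by rw [← Real.exp_add, mul_neg, add_neg_cancel, Real.exp_zero]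
  filter_upwards [(tendsto_pow_atTop_nhds_zero_of_lt_one hρ0 hρ1).eventually_lt_const
    (sub_pos.2 hα1)] with n hn
  set t := Real.exp (n * r)
  rw [upperQuantile_eq_sSup]
  refine le_csSup (bddAbove_quantileSet hp hα fun i => (hK i).le) ⟨(Real.exp_pos _).le, ?_⟩
  have hsplit : (∑ k ∈ countFinset m n, if t ≤ mono K k then countProb p k else 0)
      + (∑ k ∈ countFinset m n, if mono K k < t then countProb p k else 0) = 1 := by
    rw [← sum_add_distrib, ← sum_countProb hpsum n]
    refine sum_congr rfl fun k _ => ?_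
    by_cases h : t ≤ mono K k <;> simp [h, not_lt]
  have hlower : (∑ k ∈ countFinset m n, if mono K k < t then countProb p k else 0) ≤ ρ ^ n := by
    refine (sum_countProb_mono_lt_le hp hK hs.le (Real.exp_pos _).le).trans_eq ?_
    rw [← Real.exp_mul, mul_pow, ← Real.exp_nat_mul]
    ring_nf
  linarith

lemma eq_kelly_of_mapClusterPt {m : ℕ} {p q : Fin m → ℝ} {α : ℝ} (hp : ∀ i, 0 < p i)
    (hpsum : ∑ i, p i = 1) (hq : ∀ i, 0 < q i) (hα : 0 < α) (hα1 : α < 1)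
    {Wseq : ℕ → Fin m → ℝ} (hWseq : ∀ᶠ n in atTop, (∀ i, 0 ≤ Wseq n i) ∧
      upperQuantile p n α (fun i => p i / q i) ≤ upperQuantile p n α (Wseq n))
    {W : Fin m → ℝ} (hW : W ∈ closedSimplex q) (hclus : MapClusterPt W atTop Wseq) :
    W = fun i => p i / q i := by
  by_contra hne
  obtain ⟨s, hs, hlt⟩ := exists_sum_rpow_lt_exp_kelly hp hpsum hq hW hne
  obtain ⟨c, hGc, hcΛ⟩ := exists_between hlt
  have hc : 0 < c := (sum_nonneg fun i _ =>
    mul_nonneg (hp i).le (Real.rpow_nonneg (hW.1 i) s)).trans_lt hGc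
  obtain ⟨r, hcr, hrΛ⟩ : ∃ r, Real.log c / s < r ∧ r < ∑ i, p i * Real.log (p i / q i) :=
    exists_between <| by rwa [div_lt_iff₀ hs, mul_comm, Real.log_lt_iff_lt_exp hc]
  rw [div_lt_iff₀ hs, mul_comm, Real.log_lt_iff_lt_exp hc] at hcr
  have hρ1 : c / Real.exp (s * r) < 1 := (div_lt_one (Real.exp_pos _)).2 hcr
  have hnear := hclus.frequently
    (eventually_upperQuantile_rpow_le (fun i => (hp i).le) hα hs hGc)
  have hlow := eventually_exp_le_upperQuantile (fun i => (hp i).le) hpsum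
    (fun i => div_pos (hp i) (hq i)) hα hα1 hrΛ
  have hdecay :=
    (tendsto_pow_atTop_nhds_zero_of_lt_one (by positivity) hρ1).eventually_lt_const hα
  obtain ⟨n, hQn, ⟨hWn, hle⟩, hQK, hρn⟩ :=
    (hnear.and_eventually (hWseq.and (hlow.and hdecay))).exists
  have hgrowth : Real.exp (s * r) ^ n ≤ c ^ n / α :=
    calc Real.exp (s * r) ^ n = Real.exp (n * r) ^ s := by
          rw [← Real.exp_nat_mul, ← Real.exp_mul]; ring_nf
      _ ≤ upperQuantile p n α (Wseq n) ^ s :=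
          Real.rpow_le_rpow (Real.exp_pos _).le (hQK.trans hle) hs.le
      _ ≤ c ^ n / α := hQn n hWn
  rw [div_pow, div_lt_iff₀ (pow_pos (Real.exp_pos _) n)] at hρn
  rw [le_div_iff₀ hα] at hgrowth
  linarith

theorem maximizers_collapse_to_kelly_general (m : ℕ)
    (p q : Fin m → ℝ) (hp : ∀ i, 0 < p i ∧ p i < 1) (hpsum : ∑ i, p i = 1)
    (hq : ∀ i, 0 < q i) (α : ℝ) (hα : 0 < α ∧ α < 1)
    (Wseq : ℕ → (Fin m → ℝ))
    (hW : ∀ n : ℕ, 1 ≤ n → Wseq n ∈ closedSimplex q ∧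
      upperQuantile p n α (Wseq n) = sSup (upperQuantile p n α '' closedSimplex q)) :
    Filter.Tendsto Wseq Filter.atTop (nhds (fun i => p i / q i)) := by
  have hp0 : ∀ i, 0 < p i := fun i => (hp i).1
  have hK := kelly_mem_closedSimplex hp0 hpsum hq
  have hmax : ∀ᶠ n in atTop, Wseq n ∈ closedSimplex q ∧
      upperQuantile p n α (fun i => p i / q i) ≤ upperQuantile p n α (Wseq n) := by
    filter_upwards [eventually_ge_atTop 1] with n hn
    refine ⟨(hW n hn).1, (hW n hn).2 ▸ le_csSup ⟨(∑ i, p i / q i) ^ n / α, ?_⟩ ⟨_, hK, rfl⟩⟩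
    rintro _ ⟨V, hV, rfl⟩
    exact upperQuantile_le_of_mem_closedSimplex (fun i => (hp0 i).le) hq hα.1 hV
  exact (isCompact_closedSimplex hq).tendsto_nhds_of_unique_mapClusterPt
    (hmax.mono fun n h => h.1) fun W hW hclus => eq_kelly_of_mapClusterPt hp0 hpsum hq hα.1
      hα.2 (hmax.mono fun n h => ⟨h.1.1, h.2⟩) hW hclus

/-- **Collapse of exact maximizers to ordinary Kelly.** If for each `n ≥ 1` the point
`W_n ∈ W̄` attains `sup_{W ∈ W̄} Q_{n,α}(W)`, then `W_n → W^K` where `W^K_i = p_i/q_i`. -/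
theorem maximizers_collapse_to_kelly (m : ℕ) (hm : 2 ≤ m)
    (p q : Fin m → ℝ) (hp : ∀ i, 0 < p i ∧ p i < 1) (hpsum : ∑ i, p i = 1)
    (hq : ∀ i, 0 < q i) (α : ℝ) (hα : 0 < α ∧ α < 1)
    (Wseq : ℕ → (Fin m → ℝ))
    (hW : ∀ n : ℕ, 1 ≤ n → Wseq n ∈ closedSimplex q ∧
      upperQuantile p n α (Wseq n) = sSup (upperQuantile p n α '' closedSimplex q)) :
    Filter.Tendsto Wseq Filter.atTop (nhds (fun i => p i / q i)) :=
  maximizers_collapse_to_kelly_general m p q hp hpsum hq α hα Wseq hW
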